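/- arXiv:2305.18351 — 8 statements merged into one kernel-verified Lean document; each statement's English description precedes it below -/
import Mathlib

section
/- The integral (1/π) ∫_{-∞}^{∞} (sin t / t)^4 dt equals 2/3. -/
/-!
The Fourier transform `𝓕 f ξ = ∫ e^{-2πixξ} f x dx` of the tent function `max (1 - |x|) 0` is
`sinc (π ξ) ^ 2`. Self-adjointness `∫ 𝓕 f * g = ∫ f * 𝓕 g` with `g = 𝓕 f`, combined with Fourier
inversion `𝓕 (𝓕 f) x = f (-x)`, turns `∫ sinc (π ξ) ^ 4` into `∫ tent ^ 2 = 2 / 3`, and the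
substitution `t = π ξ` gives the factor `1 / π`.
-/

open MeasureTheory Real Set
open scoped FourierTransform

noncomputable def tent (x : ℝ) : ℝ := max (1 - |x|) 0

lemma tent_of_one_le_abs {x : ℝ} (hx : 1 ≤ |x|) : tent x = 0 := max_eq_right (by linarith)

lemma tent_of_mem_Icc {x : ℝ} (hx : x ∈ Icc 0 1) : tent x = 1 - x := by
  rw [tent, abs_of_nonneg hx.1]
  exact max_eq_left (by linarith [hx.2])

@[simp] lemma tent_neg (x : ℝ) : tent (-x) = tent x := by simp [tent]

@[fun_prop] lemma continuous_tent : Continuous tent := by unfold tent; fun_prop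

lemma hasCompactSupport_tent : HasCompactSupport tent :=
  HasCompactSupport.intro (isCompact_closedBall 0 1) fun x hx =>
    tent_of_one_le_abs (by simpa using hx : 1 < |x|).le

lemma integrable_tent : Integrable tent :=
  continuous_tent.integrable_of_hasCompactSupport hasCompactSupport_tent

lemma integral_mul_tent_of_even {f : ℝ → ℝ} (hf : ∀ x, f (-x) = f x) :
    ∫ x, f x * tent x = 2 * ∫ x in (0 : ℝ)..1, f x * (1 - x) := by
  have h_abs : (fun x => f x * tent x) = fun x => f |x| * tent |x| := funext fun x => by
    rcases abs_choice x with h | h <;> simp [h, hf]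
  rw [h_abs, integral_comp_abs (f := fun x => f x * tent x),
    setIntegral_eq_of_subset_of_forall_sdiff_eq_zero measurableSet_Ioi Ioc_subset_Ioi_self,
    ← intervalIntegral.integral_of_le zero_le_one]
  · refine congrArg _ (intervalIntegral.integral_congr fun x hx => ?_)
    rw [uIcc_of_le zero_le_one] at hx
    rw [tent_of_mem_Icc hx]
  · rintro x ⟨hx_pos : 0 < x, hx_not_le⟩
    have hx : 1 < x := by simpa [hx_pos] using hx_not_le
    rw [tent_of_one_le_abs (by rw [abs_of_pos hx_pos]; exact hx.le), mul_zero]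

lemma integral_tent : ∫ x, tent x = 1 := by
  have h := integral_mul_tent_of_even (f := fun _ => 1) (fun _ => rfl)
  simpa [intervalIntegral.integral_comp_sub_left (fun x => x)] using h

lemma integral_tent_sq : ∫ x, tent x ^ 2 = 2 / 3 := by
  simp_rw [sq]
  rw [integral_mul_tent_of_even tent_neg,
    intervalIntegral.integral_congr (g := fun x => (1 - x) ^ 2)]
  · norm_num [intervalIntegral.integral_comp_sub_left (fun x => x ^ 2)]
  · intro x hx
    rw [uIcc_of_le zero_le_one] at hx
    simp only [tent_of_mem_Icc hx, sq]

lemma integral_cos_mul_one_sub {c : ℝ} (hc : c ≠ 0) :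
    ∫ x in (0 : ℝ)..1, cos (c * x) * (1 - x) = (1 - cos c) / c ^ 2 := by
  have h_deriv : ∀ x ∈ uIcc (0 : ℝ) 1, HasDerivAt
      (fun x => (1 - x) * sin (c * x) / c - cos (c * x) / c ^ 2) (cos (c * x) * (1 - x)) x := by
    intro x _
    have h_lin := (hasDerivAt_id x).const_mul c
    have := ((((hasDerivAt_id x).const_sub 1).mul (h_lin.sin)).div_const c).sub
      (h_lin.cos.div_const (c ^ 2))
    refine this.congr_deriv ?_
    simp only [id]
    field_simp
    ring
  rw [intervalIntegral.integral_eq_sub_of_hasDerivAt h_deriv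
    ((by fun_prop : Continuous _).intervalIntegrable _ _)]
  simp only [sub_self, mul_zero, sin_zero, cos_zero, mul_one, zero_mul, zero_div]
  field_simp
  ring

lemma integral_cos_mul_tent (c : ℝ) : ∫ x, cos (c * x) * tent x = sinc (c / 2) ^ 2 := by
  rcases eq_or_ne c 0 with rfl | hc
  · simpa using integral_tent
  rw [integral_mul_tent_of_even (fun x => by rw [mul_neg, cos_neg]), integral_cos_mul_one_sub hc,
    sinc_of_ne_zero (div_ne_zero hc two_ne_zero)]
  have : 1 - cos c = 2 * sin (c / 2) ^ 2 := by
    rw [sin_sq_eq_half_sub]; ring_nf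
  rw [this]
  field_simp

lemma sinc_sq_mul_sq (x : ℝ) : sinc x ^ 2 * x ^ 2 = sin x ^ 2 := by
  rcases eq_or_ne x 0 with rfl | hx
  · simp
  · rw [sinc_of_ne_zero hx]; field_simp

lemma integrable_sinc_sq : Integrable fun x => sinc x ^ 2 := by
  refine (integrable_inv_one_add_sq.const_mul 2).mono' (by fun_prop) (.of_forall fun x => ?_)
  rw [Real.norm_eq_abs, abs_of_nonneg (sq_nonneg _), ← div_eq_mul_inv, le_div_iff₀ (by positivity)]
  calc sinc x ^ 2 * (1 + x ^ 2) = sinc x ^ 2 + sin x ^ 2 := by rw [← sinc_sq_mul_sq]; ring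
    _ ≤ 1 + 1 := add_le_add ((sq_le_one_iff_abs_le_one _).2 (abs_sinc_le_one x)) (sin_sq_le_one x)
    _ = 2 := one_add_one_eq_two

lemma integral_eq_zero_of_odd {G : Type*} [MeasurableSpace G] [AddGroup G] [MeasurableNeg G]
    {μ : Measure G} [μ.IsNegInvariant] {g : G → ℝ} (hg : ∀ x, g (-x) = -g x) :
    ∫ x, g x ∂μ = 0 := by
  have h := integral_neg_eq_self g μ
  simp only [hg, integral_neg] at h
  linarith

lemma fourier_ofReal_of_even {f : ℝ → ℝ} (hf : Integrable f) (h_even : ∀ x, f (-x) = f x)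
    (ξ : ℝ) : 𝓕 (fun x => (f x : ℂ)) ξ = ∫ x, cos (2 * π * ξ * x) * f x := by
  have h_integrand (x : ℝ) : Complex.exp (↑(-2 * π * x * ξ) * Complex.I) • (f x : ℂ) =
      ↑(cos (2 * π * ξ * x) * f x) - ↑(sin (2 * π * ξ * x) * f x) * Complex.I := by
    rw [Complex.exp_mul_I, smul_eq_mul, ← Complex.ofReal_cos, ← Complex.ofReal_sin,
      show -2 * π * x * ξ = -(2 * π * ξ * x) by ring, cos_neg, sin_neg]
    push_cast
    ring
  have h_bdd_mul {g : ℝ → ℝ} (hg : Continuous g) (hg_le : ∀ x, |g x| ≤ 1) :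
      Integrable fun x => g (2 * π * ξ * x) * f x :=
    hf.bdd_mul (by fun_prop) (.of_forall fun x => hg_le _)
  have h_odd : ∫ x, sin (2 * π * ξ * x) * f x = 0 :=
    integral_eq_zero_of_odd fun x => by rw [h_even, mul_neg, sin_neg, neg_mul]
  rw [Real.fourier_real_eq_integral_exp_smul]
  simp_rw [h_integrand]
  rw [integral_sub (h_bdd_mul continuous_cos abs_cos_le_one).ofReal
    ((h_bdd_mul continuous_sin abs_sin_le_one).ofReal.mul_const _), integral_mul_const,
    integral_complex_ofReal, integral_complex_ofReal, h_odd]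
  simp

lemma fourier_tent (ξ : ℝ) : 𝓕 (fun x => (tent x : ℂ)) ξ = (sinc (π * ξ) ^ 2 : ℝ) := by
  rw [fourier_ofReal_of_even integrable_tent tent_neg, integral_cos_mul_tent]
  ring_nf

lemma integral_fourier_mul_fourier {f : ℝ → ℂ}
    (hf_cont : Continuous f) (hf : Integrable f) (hFf : Integrable (𝓕 f)) :
    ∫ ξ, 𝓕 f ξ * 𝓕 f ξ = ∫ x, f x * f (-x) := by
  have h_adjoint := VectorFourier.integral_fourierIntegral_smul_eq_flip
    Real.continuous_fourierChar (L := innerₗ ℝ) continuous_inner hf hFf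
  rw [flip_innerₗ] at h_adjoint
  have h_inversion (x : ℝ) : 𝓕 (𝓕 f) x = f (-x) := by
    rw [← neg_neg x, ← Real.fourierInv_eq_fourier_neg, hf_cont.fourierInv_fourier_eq hf hFf, neg_neg]
  change ∫ ξ, 𝓕 f ξ • 𝓕 f ξ = ∫ x, f x • 𝓕 (𝓕 f) x at h_adjoint
  simpa only [smul_eq_mul, h_inversion] using h_adjoint

lemma integral_sinc_pi_mul_pow_four : ∫ ξ, sinc (π * ξ) ^ 4 = 2 / 3 := by
  have h_fourier : 𝓕 (fun x => (tent x : ℂ)) = fun ξ => ((sinc (π * ξ) ^ 2 : ℝ) : ℂ) :=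
    funext fourier_tent
  have h := integral_fourier_mul_fourier (f := fun x => (tent x : ℂ)) (by fun_prop)
    integrable_tent.ofReal
    (h_fourier ▸ (integrable_sinc_sq.comp_mul_left' pi_ne_zero).ofReal)
  simp only [fourier_tent, tent_neg, ← Complex.ofReal_mul, integral_complex_ofReal,
    Complex.ofReal_inj] at h
  calc ∫ ξ, sinc (π * ξ) ^ 4 = ∫ ξ, sinc (π * ξ) ^ 2 * sinc (π * ξ) ^ 2 := by simp_rw [← pow_add]
    _ = ∫ x, tent x * tent x := h
    _ = 2 / 3 := by simpa only [sq] using integral_tent_sq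

theorem sinc_fourth_integral :
    (1/Real.pi) * ∫ t : ℝ, (Real.sin t / t)^4 = 2/3 := by
  have h_sinc : ∫ t, (sin t / t) ^ 4 = ∫ t, sinc t ^ 4 :=
    integral_congr_ae <| (Measure.ae_ne volume 0).mono fun t ht => by simp only [sinc_of_ne_zero ht]
  have h_scale : ∫ ξ, sinc (π * ξ) ^ 4 = π⁻¹ * ∫ t, sinc t ^ 4 := by
    rw [Measure.integral_comp_mul_left (fun t => sinc t ^ 4), abs_of_pos (inv_pos.2 pi_pos),
      smul_eq_mul]
  rw [h_sinc, one_div, ← h_scale, integral_sinc_pi_mul_pow_four]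
end

section
/- For the slice K = Q ∩ H of the unit cube Q = [-1/2,1/2]^4 by the hyperplane H : x + y + z + t = 0, and for 0 ≤ c < 1/2, the planar cross-section K ∩ {t = -c}, identified with its projection onto the (x,y)-plane, equals the hexagon {(x,y) : |x| ≤ 1/2, |y| ≤ 1/2, -1/2 + c ≤ x + y ≤ 1/2 + c}, which has area 3/4 - c^2. -/
open MeasureTheory

lemma hex_lin_integral (a b k : ℝ) : ∫ x in a..b, (x + k) = (b^2 - a^2)/2 + k*(b-a) := by
  rw [intervalIntegral.integral_add (f := fun x : ℝ => x) (g := fun _ : ℝ => k)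
    (continuous_id.intervalIntegrable _ _) (continuous_const.intervalIntegrable _ _),
    integral_id, intervalIntegral.integral_const, smul_eq_mul]
  ring

lemma hex_integral (c : ℝ) (hc0 : 0 ≤ c) (hc1 : c < 1/2) :
    ∫ x in (-(1/2) : ℝ)..(1/2), (1 - |x - c|) = 3/4 - c^2 := by
  have hcont : Continuous fun x : ℝ => 1 - |x - c| :=
    continuous_const.sub (continuous_id.sub continuous_const).abs
  have h1 : IntervalIntegrable (fun x : ℝ => 1 - |x - c|) volume (-(1/2)) c :=
    hcont.intervalIntegrable _ _
  have h2 : IntervalIntegrable (fun x : ℝ => 1 - |x - c|) volume c (1/2) :=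
    hcont.intervalIntegrable _ _
  rw [← intervalIntegral.integral_add_adjacent_intervals h1 h2]
  have e1 : ∫ x in (-(1/2):ℝ)..c, (1 - |x - c|) = ∫ x in (-(1/2):ℝ)..c, (x + (1 - c)) := by
    apply intervalIntegral.integral_congr
    intro x hx
    rw [Set.uIcc_of_le (by linarith)] at hx
    show 1 - |x - c| = x + (1 - c)
    rw [abs_of_nonpos (by linarith [hx.2])]
    ring
  have e2 : ∫ x in c..(1/2:ℝ), (1 - |x - c|) = ∫ x in c..(1/2:ℝ), (-(x + (-(1 + c)))) := by
    apply intervalIntegral.integral_congr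
    intro x hx
    rw [Set.uIcc_of_le (by linarith)] at hx
    show 1 - |x - c| = -(x + (-(1 + c)))
    rw [abs_of_nonneg (by linarith [hx.1])]
    ring
  rw [e1, e2, intervalIntegral.integral_neg, hex_lin_integral, hex_lin_integral]
  ring

theorem slice_cross_section (c : ℝ) (hc0 : 0 ≤ c) (hc1 : c < 1/2) :
    (fun p : Fin 4 → ℝ => (p 0, p 1)) ''
      {p : Fin 4 → ℝ | (∀ i, |p i| ≤ 1/2) ∧ p 0 + p 1 + p 2 + p 3 = 0 ∧ p 3 = -c}
      = {q : ℝ × ℝ | |q.1| ≤ 1/2 ∧ |q.2| ≤ 1/2 ∧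
          -1/2 + c ≤ q.1 + q.2 ∧ q.1 + q.2 ≤ 1/2 + c} ∧
    volume {q : ℝ × ℝ | |q.1| ≤ 1/2 ∧ |q.2| ≤ 1/2 ∧
          -1/2 + c ≤ q.1 + q.2 ∧ q.1 + q.2 ≤ 1/2 + c}
      = ENNReal.ofReal (3/4 - c^2) := by
  constructor
  · ext q
    simp only [Set.mem_image, Set.mem_setOf_eq]
    constructor
    · rintro ⟨p, ⟨hp, hsum, ht⟩, hpq⟩
      have h2 := hp 2
      rw [abs_le] at h2
      rw [ht] at hsum
      rw [← hpq]
      refine ⟨hp 0, hp 1, ?_, ?_⟩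
      · show -1/2 + c ≤ p 0 + p 1
        linarith [h2.2]
      · show p 0 + p 1 ≤ 1/2 + c
        linarith [h2.1]
    · rintro ⟨hx, hy, hl, hu⟩
      rw [abs_le] at hx hy
      refine ⟨![q.1, q.2, c - q.1 - q.2, -c], ⟨?_, ?_, ?_⟩, ?_⟩
      · intro i
        fin_cases i
        · show |q.1| ≤ 1/2
          rw [abs_le]; exact hx
        · show |q.2| ≤ 1/2
          rw [abs_le]; exact hy
        · show |c - q.1 - q.2| ≤ 1/2
          rw [abs_le]; constructor <;> linarith [hx.1, hx.2, hy.1, hy.2]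
        · show |(-c)| ≤ 1/2
          rw [abs_neg, abs_of_nonneg hc0]; linarith
      · show q.1 + q.2 + (c - q.1 - q.2) + (-c) = 0
        ring
      · show -c = -c
        rfl
      · show (q.1, q.2) = q
        exact Prod.mk.eta
  · set S : Set (ℝ × ℝ) := {q : ℝ × ℝ | |q.1| ≤ 1/2 ∧ |q.2| ≤ 1/2 ∧
        -1/2 + c ≤ q.1 + q.2 ∧ q.1 + q.2 ≤ 1/2 + c} with hSdef
    have hmeas : MeasurableSet S := by
      apply MeasurableSet.inter
      · exact measurableSet_le (measurable_fst.abs) measurable_const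
      apply MeasurableSet.inter
      · exact measurableSet_le (measurable_snd.abs) measurable_const
      apply MeasurableSet.inter
      · exact measurableSet_le measurable_const (measurable_fst.add measurable_snd)
      · exact measurableSet_le (measurable_fst.add measurable_snd) measurable_const
    rw [MeasureTheory.Measure.volume_eq_prod, MeasureTheory.Measure.prod_apply hmeas]
    have hslice : ∀ x : ℝ, (Prod.mk x ⁻¹' S) =
        if x ∈ Set.Icc (-(1/2):ℝ) (1/2) then
          Set.Icc (max (-(1/2)) (-(1/2)+c-x)) (min (1/2) (1/2+c-x)) else (∅ : Set ℝ) := by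
      intro x
      ext y
      by_cases hx : x ∈ Set.Icc (-(1/2):ℝ) (1/2)
      · rw [if_pos hx]
        obtain ⟨hx1, hx2⟩ := hx
        simp only [Set.mem_preimage, hSdef, Set.mem_setOf_eq, Set.mem_Icc, abs_le,
          le_min_iff, max_le_iff]
        constructor
        · rintro ⟨_, hy, hl, hu⟩
          exact ⟨⟨hy.1, by linarith⟩, hy.2, by linarith⟩
        · rintro ⟨⟨h1, h2⟩, h3, h4⟩
          exact ⟨⟨hx1, hx2⟩, ⟨h1, h3⟩, by linarith, by linarith⟩
      · rw [if_neg hx]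
        simp only [Set.mem_preimage, hSdef, Set.mem_setOf_eq, Set.mem_empty_iff_false,
          iff_false]
        rintro ⟨hax, _⟩
        rw [abs_le] at hax
        exact hx ⟨hax.1, hax.2⟩
    have hlint : ∫⁻ x, volume (Prod.mk x ⁻¹' S) =
        ∫⁻ x in Set.Icc (-(1/2):ℝ) (1/2), ENNReal.ofReal (1 - |x - c|) := by
      rw [← lintegral_indicator measurableSet_Icc]
      apply lintegral_congr
      intro x
      rw [hslice x]
      by_cases hx : x ∈ Set.Icc (-(1/2):ℝ) (1/2)
      · rw [if_pos hx, Set.indicator_of_mem hx, Real.volume_Icc]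
        congr 1
        rcases le_total x c with h | h
        · rw [min_eq_left (by linarith), max_eq_right (by linarith), abs_of_nonpos (by linarith)]
          ring
        · rw [min_eq_right (by linarith), max_eq_left (by linarith), abs_of_nonneg (by linarith)]
          ring
      · rw [if_neg hx, Set.indicator_of_notMem hx, measure_empty]
    rw [hlint]
    have hcont : Continuous fun x : ℝ => 1 - |x - c| :=
    continuous_const.sub (continuous_id.sub continuous_const).abs
    have hint : IntegrableOn (fun x : ℝ => 1 - |x - c|) (Set.Icc (-(1/2)) (1/2)) volume :=
      hcont.integrableOn_Icc
    have hnn : 0 ≤ᵐ[volume.restrict (Set.Icc (-(1/2):ℝ) (1/2))] fun x : ℝ => 1 - |x - c| := by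
      apply (ae_restrict_iff' measurableSet_Icc).2
      filter_upwards with x hx
      obtain ⟨h1, h2⟩ := hx
      have : |x - c| ≤ 1 := abs_le.mpr ⟨by linarith, by linarith⟩
      simp only [Pi.zero_apply]
      linarith
    rw [← MeasureTheory.ofReal_integral_eq_lintegral_ofReal hint hnn]
    congr 1
    rw [MeasureTheory.integral_Icc_eq_integral_Ioc,
      ← intervalIntegral.integral_of_le (by norm_num : (-(1/2):ℝ) ≤ 1/2)]
    exact hex_integral c hc0 hc1
end

section
/- The face F = Q ∩ H ∩ {t = -1/2}, where Q = [-1/2,1/2]^4 and H : x + y + z + t = 0, is the convex hull of the three points (1/2, -1/2, 1/2, -1/2), (1/2, 1/2, -1/2, -1/2), and (-1/2, 1/2, 1/2, -1/2), and these three points are affinely independent (so F is a nondegenerate triangle). -/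
/-!
Once `t = -1/2` is fixed, the slice is `|x|, |y|, |z| ≤ 1/2` with `x + y + z = 1/2`. A point `p`
of it is the convex combination of the three vertices with weights `1/2 - p 1`, `1/2 - p 2`,
`1/2 - p 0`: these are nonnegative by the box bounds and sum to `1` by the linear equation.
Conversely the slice is convex and contains the vertices. The vertices are even linearly
independent, hence affinely independent.
-/

theorem smul_add_smul_add_smul_mem_convexHull {𝕜 E : Type*} [Field 𝕜] [LinearOrder 𝕜]
    [IsStrictOrderedRing 𝕜] [AddCommGroup E] [Module 𝕜 E] {a b c : E} {α β γ : 𝕜}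
    (hα : 0 ≤ α) (hβ : 0 ≤ β) (hγ : 0 ≤ γ) (hsum : α + β + γ = 1) :
    α • a + β • b + γ • c ∈ convexHull 𝕜 {a, b, c} := by
  simpa [Fin.sum_univ_three] using (convex_convexHull 𝕜 ({a, b, c} : Set E)).sum_mem
    (t := Finset.univ) (w := ![α, β, γ]) (z := ![a, b, c]) (by simp [Fin.forall_fin_succ, *])
    (by simp [Fin.sum_univ_three, hsum]) (fun i _ => subset_convexHull 𝕜 _ (by fin_cases i <;> simp))

noncomputable section

def cubeSlice : Set (Fin 4 → ℝ) :=
  {p | (∀ i, |p i| ≤ 1/2) ∧ p 0 + p 1 + p 2 + p 3 = 0 ∧ p 3 = -(1/2)}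

def sliceVertexA : Fin 4 → ℝ := ![1/2, -(1/2), 1/2, -(1/2)]
def sliceVertexB : Fin 4 → ℝ := ![1/2, 1/2, -(1/2), -(1/2)]
def sliceVertexC : Fin 4 → ℝ := ![-(1/2), 1/2, 1/2, -(1/2)]

end

theorem convex_cubeSlice : Convex ℝ cubeSlice := by
  have hcube : {p : Fin 4 → ℝ | ∀ i, |p i| ≤ 1/2} = Metric.closedBall 0 (1/2) := by
    ext p
    simp [pi_norm_le_iff_of_nonneg]
  have hsum : IsLinearMap ℝ fun p : Fin 4 → ℝ => p 0 + p 1 + p 2 + p 3 :=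
    ⟨fun p q => by simp only [Pi.add_apply]; ring,
      fun c p => by simp only [Pi.smul_apply, smul_eq_mul]; ring⟩
  have hproj : IsLinearMap ℝ fun p : Fin 4 → ℝ => p 3 := ⟨fun _ _ => rfl, fun _ _ => rfl⟩
  exact (hcube ▸ convex_closedBall 0 (1/2)).inter
    ((convex_hyperplane hsum 0).inter (convex_hyperplane hproj _))

theorem sliceVertices_subset_cubeSlice :
    {sliceVertexA, sliceVertexB, sliceVertexC} ⊆ cubeSlice := by
  rintro v (rfl | rfl | rfl) <;>
    exact ⟨fun i => by fin_cases i <;> norm_num [sliceVertexA, sliceVertexB, sliceVertexC, abs_le],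
      by simp only [sliceVertexA, sliceVertexB, sliceVertexC, Matrix.cons_val]; norm_num, rfl⟩

theorem eq_barycentric_of_mem_cubeSlice {p : Fin 4 → ℝ} (hp : p ∈ cubeSlice) :
    p = (1/2 - p 1) • sliceVertexA + (1/2 - p 2) • sliceVertexB + (1/2 - p 0) • sliceVertexC := by
  obtain ⟨-, hsum, h3⟩ := hp
  funext i
  fin_cases i <;>
    simp only [Fin.zero_eta, Fin.mk_one, Fin.reduceFinMk, Pi.add_apply, Pi.smul_apply, smul_eq_mul,
      sliceVertexA, sliceVertexB, sliceVertexC, Matrix.cons_val] <;> linarith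

theorem cubeSlice_subset_convexHull :
    cubeSlice ⊆ convexHull ℝ {sliceVertexA, sliceVertexB, sliceVertexC} := by
  intro p hp
  have hbound : ∀ i, 0 ≤ 1/2 - p i := fun i => sub_nonneg.2 (abs_le.1 (hp.1 i)).2
  rw [eq_barycentric_of_mem_cubeSlice hp]
  exact smul_add_smul_add_smul_mem_convexHull (hbound 1) (hbound 2) (hbound 0)
    (by linarith [hp.2.1, hp.2.2])

theorem cubeSlice_eq_convexHull :
    cubeSlice = convexHull ℝ {sliceVertexA, sliceVertexB, sliceVertexC} :=
  cubeSlice_subset_convexHull.antisymm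
    (convexHull_min sliceVertices_subset_cubeSlice convex_cubeSlice)

theorem linearIndependent_sliceVertices :
    LinearIndependent ℝ ![sliceVertexA, sliceVertexB, sliceVertexC] := by
  rw [Fintype.linearIndependent_iff]
  intro g hg
  have h0 := congrFun hg 0
  have h1 := congrFun hg 1
  have h2 := congrFun hg 2
  simp only [Fin.sum_univ_three, Finset.sum_apply, Pi.smul_apply, smul_eq_mul, Pi.zero_apply,
    sliceVertexA, sliceVertexB, sliceVertexC, Matrix.cons_val] at h0 h1 h2
  intro i
  fin_cases i <;> simp only [Fin.zero_eta, Fin.mk_one, Fin.reduceFinMk] <;> linarith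

theorem slice_triangle_face :
    {p : Fin 4 → ℝ | (∀ i, |p i| ≤ 1/2) ∧ p 0 + p 1 + p 2 + p 3 = 0 ∧ p 3 = -(1/2)}
      = convexHull ℝ {![1/2, -(1/2), 1/2, -(1/2)], ![1/2, 1/2, -(1/2), -(1/2)],
          ![-(1/2), 1/2, 1/2, -(1/2)]} ∧
    AffineIndependent ℝ
      ![(![1/2, -(1/2), 1/2, -(1/2)] : Fin 4 → ℝ), ![1/2, 1/2, -(1/2), -(1/2)],
        ![-(1/2), 1/2, 1/2, -(1/2)]] :=
  ⟨cubeSlice_eq_convexHull, linearIndependent_sliceVertices.affineIndependent⟩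
end

section
/- Every face of a zonoid is a translate of a zonoid: if K = μ(Σ) ⊆ R^n is the range of a nonatomic vector measure μ, x* is a nonzero linear functional with β = sup{x*(μ(E)) : E ∈ Σ} attained, then the face F = {x ∈ K : x*(x) = β} satisfies F = μ(S₁) + μ|_{S₀}(Σ) for measurable sets S₀, S₁ such that x*∘μ(S₁) = β and every measurable subset of S₀ is (x*∘μ)-null. -/
/-!
Let `g` be the Radon–Nikodym density of the signed measure `f ∘ μ` with respect to the (finite)
variation of `μ`. Then `f (μ E) = ∫_E g`, which is maximal exactly when `E` contains `{g > 0}` and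
misses `{g < 0}` up to null sets. Null sets of the variation are `μ`-null, so every maximizer has
`μ E = μ {g > 0} + μ (E ∩ {g = 0})`, and `f ∘ μ` vanishes on subsets of `{g = 0}`.
-/

open MeasureTheory Set

lemma Pi.enorm_le_sum_enorm {ι : Type*} [Fintype ι] {E : ι → Type*}
    [∀ i, SeminormedAddGroup (E i)] (x : ∀ i, E i) : ‖x‖ₑ ≤ ∑ i, ‖x i‖ₑ := by
  simp only [enorm, ← ENNReal.ofNNReal_finsetSum, ENNReal.coe_le_coe]
  exact pi_nnnorm_le_iff.2 fun i =>
    Finset.single_le_sum (f := fun i => ‖x i‖₊) (fun _ _ => zero_le) (Finset.mem_univ i)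

lemma Set.indicator_pos_sub_indicator_nonneg {S : Type*} (g : S → ℝ) (E : Set S) :
    0 ≤ {x | 0 < g x}.indicator g - E.indicator g := by
  intro x
  simp only [Pi.zero_apply, Pi.sub_apply, indicator]
  grind

namespace MeasureTheory

variable {S : Type*} [MeasurableSpace S]

section PositiveSet

variable {m : Measure S} {g : S → ℝ} {E : Set S}

lemma integral_indicator_pos_sub_indicator (hgm : Measurable g) (hg : Integrable g m)
    (hE : MeasurableSet E) :
    ∫ x, ({x | 0 < g x}.indicator g - E.indicator g) x ∂m =
      ∫ x in {x | 0 < g x}, g x ∂m - ∫ x in E, g x ∂m := by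
  have hpos : MeasurableSet {x | 0 < g x} := measurableSet_lt measurable_const hgm
  rw [Pi.sub_def, integral_sub (hg.indicator hpos) (hg.indicator hE), integral_indicator hpos,
    integral_indicator hE]

theorem setIntegral_le_setIntegral_pos (hgm : Measurable g) (hg : Integrable g m)
    (hE : MeasurableSet E) : ∫ x in E, g x ∂m ≤ ∫ x in {x | 0 < g x}, g x ∂m := by
  have := integral_nonneg (μ := m) (indicator_pos_sub_indicator_nonneg g E)
  rw [integral_indicator_pos_sub_indicator hgm hg hE] at this
  linarith

theorem ae_eq_of_setIntegral_eq_setIntegral_pos (hgm : Measurable g) (hg : Integrable g m)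
    (hE : MeasurableSet E) (h : ∫ x in E, g x ∂m = ∫ x in {x | 0 < g x}, g x ∂m) :
    E =ᵐ[m] ({x | 0 < g x} ∪ E ∩ {x | g x = 0} : Set S) := by
  have hpos : MeasurableSet {x | 0 < g x} := measurableSet_lt measurable_const hgm
  have hzero : {x | 0 < g x}.indicator g - E.indicator g =ᵐ[m] 0 := by
    refine (integral_eq_zero_iff_of_nonneg (indicator_pos_sub_indicator_nonneg g E)
      ((hg.indicator hpos).sub (hg.indicator hE))).1 ?_
    rw [integral_indicator_pos_sub_indicator hgm hg hE, h, sub_self]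
  filter_upwards [hzero] with x hx
  simp only [Pi.sub_apply, Pi.zero_apply, indicator] at hx
  change (x ∈ E) = (0 < g x ∨ x ∈ E ∧ g x = 0)
  grind

end PositiveSet

namespace VectorMeasure

instance isFiniteMeasure_variation_pi {ι : Type*} [Fintype ι] (μ : VectorMeasure S (ι → ℝ)) :
    IsFiniteMeasure μ.variation := by
  let coord (i : ι) : SignedMeasure S := μ.mapRange (Pi.evalAddMonoidHom _ i) (continuous_apply i)
  refine isFiniteMeasure_of_le (∑ i, (coord i).totalVariation)
    (variation_le_of_forall_enorm_le fun E _ => ?_)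
  rw [Measure.finsetSum_apply]
  exact (Pi.enorm_le_sum_enorm _).trans
    (Finset.sum_le_sum fun i _ => (coord i).enorm_le_totalVariation E)

theorem AbsolutelyContinuous.apply_eq_of_ae_eq {M : Type*} [AddCommMonoid M]
    [TopologicalSpace M] [T2Space M] {v : VectorMeasure S M} {m : Measure S}
    (hv : v ≪ᵥ m.toENNRealVectorMeasure) {A B : Set S} (hA : MeasurableSet A)
    (hB : MeasurableSet B) (hAB : A =ᵐ[m] B) : v A = v B := by
  have hnull {C D : Set S} (hC : MeasurableSet C) (hD : MeasurableSet D) (h : m (C \ D) = 0) :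
      v (C \ D) = 0 :=
    hv (by rwa [Measure.toENNRealVectorMeasure_apply_measurable (hC.diff hD)])
  rw [← of_sdiff_of_sdiff_eq_zero hA hB (hnull hB hA (ae_eq_set.1 hAB).2),
    hnull hA hB (ae_eq_set.1 hAB).1, zero_add]

theorem exists_density_comp_linearMap {ι : Type*} [Fintype ι] (μ : VectorMeasure S (ι → ℝ))
    (f : (ι → ℝ) →ₗ[ℝ] ℝ) :
    ∃ g : S → ℝ, Measurable g ∧ Integrable g μ.variation ∧
      ∀ E, MeasurableSet E → f (μ E) = ∫ x in E, g x ∂μ.variation := by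
  have hfc : Continuous f := f.continuous_of_finiteDimensional
  set ν : SignedMeasure S := μ.mapRange f.toAddMonoidHom hfc
  have hν : ν ≪ᵥ μ.variation.toENNRealVectorMeasure := fun E hE => by
    change f (μ E) = 0
    rw [μ.absolutelyContinuous hE, f.map_zero]
  refine ⟨ν.rnDeriv μ.variation, ν.measurable_rnDeriv _, ν.integrable_rnDeriv _, fun E hE => ?_⟩
  rw [← withDensityᵥ_apply (ν.integrable_rnDeriv _) hE, ν.withDensityᵥ_rnDeriv_eq _ hν]
  rfl

end VectorMeasure

end MeasureTheory

theorem face_of_zonoid_general {S : Type*} [MeasurableSpace S] (n : ℕ)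
    (μ : VectorMeasure S (Fin n → ℝ))
    (f : (Fin n → ℝ) →ₗ[ℝ] ℝ) (β : ℝ)
    (hβ : β = sSup {r | ∃ E, MeasurableSet E ∧ f (μ E) = r})
    (K : Set (Fin n → ℝ)) (hK : K = {x | ∃ E, MeasurableSet E ∧ μ E = x}) :
    ∃ S₀ S₁ : Set S, MeasurableSet S₀ ∧ MeasurableSet S₁ ∧
      f (μ S₁) = β ∧
      (∀ E, E ⊆ S₀ → MeasurableSet E → f (μ E) = 0) ∧
      {x ∈ K | f x = β} =
        {y | ∃ E, MeasurableSet E ∧ y = μ S₁ + μ (E ∩ S₀)} := by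
  obtain ⟨g, hgm, hg, hrep⟩ := μ.exists_density_comp_linearMap f
  set S₁ := {x | 0 < g x}
  set S₀ := {x | g x = 0}
  have hS₁ : MeasurableSet S₁ := measurableSet_lt measurable_const hgm
  have hS₀ : MeasurableSet S₀ := hgm (measurableSet_singleton 0)
  have hmax : IsGreatest {r | ∃ E, MeasurableSet E ∧ f (μ E) = r} (f (μ S₁)) := by
    refine ⟨⟨S₁, hS₁, rfl⟩, ?_⟩
    rintro _ ⟨E, hE, rfl⟩
    rw [hrep E hE, hrep S₁ hS₁]
    exact setIntegral_le_setIntegral_pos hgm hg hE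
  have hfS₁ : f (μ S₁) = β := hβ ▸ hmax.csSup_eq.symm
  have hnull (E : Set S) (hE₀ : E ⊆ S₀) (hE : MeasurableSet E) : f (μ E) = 0 := by
    rw [hrep E hE, setIntegral_congr_fun hE hE₀, integral_zero]
  have hsplit (E : Set S) (hE : MeasurableSet E) : μ (S₁ ∪ E ∩ S₀) = μ S₁ + μ (E ∩ S₀) :=
    VectorMeasure.of_union (disjoint_left.2 fun x h₁ h₀ => h₁.ne' h₀.2) hS₁ (hE.inter hS₀)
  refine ⟨S₀, S₁, hS₀, hS₁, hfS₁, hnull, ?_⟩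
  subst hK
  ext x
  constructor
  · rintro ⟨⟨E, hE, rfl⟩, hfE⟩
    have hae : E =ᵐ[μ.variation] (S₁ ∪ E ∩ S₀ : Set S) := ae_eq_of_setIntegral_eq_setIntegral_pos hgm hg hE
      (by rw [← hrep E hE, ← hrep S₁ hS₁, hfE, hfS₁])
    exact ⟨E, hE, (hsplit E hE) ▸
      μ.absolutelyContinuous.apply_eq_of_ae_eq hE (hS₁.union (hE.inter hS₀)) hae⟩
  · rintro ⟨E, hE, rfl⟩
    exact ⟨⟨_, hS₁.union (hE.inter hS₀), hsplit E hE⟩,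
      by rw [map_add, hfS₁, hnull _ inter_subset_right (hE.inter hS₀), add_zero]⟩

theorem face_of_zonoid {S : Type*} [MeasurableSpace S] (n : ℕ)
    (μ : VectorMeasure S (Fin n → ℝ))
    (hna : ∀ E, MeasurableSet E → μ E ≠ 0 →
      ∃ F, MeasurableSet F ∧ F ⊆ E ∧ μ F ≠ 0 ∧ μ F ≠ μ E)
    (f : (Fin n → ℝ) →ₗ[ℝ] ℝ) (hf : f ≠ 0) (β : ℝ)
    (hβ : β = sSup {r | ∃ E, MeasurableSet E ∧ f (μ E) = r})
    (hattained : ∃ E, MeasurableSet E ∧ f (μ E) = β)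
    (K : Set (Fin n → ℝ)) (hK : K = {x | ∃ E, MeasurableSet E ∧ μ E = x}) :
    ∃ S₀ S₁ : Set S, MeasurableSet S₀ ∧ MeasurableSet S₁ ∧
      f (μ S₁) = β ∧
      (∀ E, E ⊆ S₀ → MeasurableSet E → f (μ E) = 0) ∧
      {x ∈ K | f x = β} =
        {y | ∃ E, MeasurableSet E ∧ y = μ S₁ + μ (E ∩ S₀)} :=
  face_of_zonoid_general n μ f β hβ K hK
end

section
/- If a ≥ 3, then for each c with 0 < c < 1/2, the cross-section of the slice K = Q ∩ H (Q = [-1/2,1/2]^4, H : ax + y + z + t = 0) by {t = -c}, projected to the (x,y)-plane, is a parallelogram whose area is independent of c, namely 1/a. -/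
open MeasureTheory

noncomputable def Lmap (a : ℝ) : ℝ × ℝ →ₗ[ℝ] ℝ × ℝ where
  toFun p := (p.1 / a - p.2 / a, p.2)
  map_add' p q := by simp [add_div]; ring
  map_smul' r p := by simp [Prod.smul_def, mul_div_assoc]; ring

lemma det_Lmap (a : ℝ) : LinearMap.det (Lmap a) = 1 / a := by
  rw [← LinearMap.det_toMatrix (Module.Basis.finTwoProd ℝ), Matrix.det_fin_two]
  simp [LinearMap.toMatrix_apply, Lmap, Module.Basis.finTwoProd, Module.Basis.coe_finTwoProd_repr]

theorem section_parallelogram_area (a : ℝ) (ha : a ≥ 3)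
    (c : ℝ) (hc0 : 0 < c) (hc1 : c < 1/2) :
    (∃ z v w : ℝ × ℝ,
      {q : ℝ × ℝ | |q.1| ≤ 1/2 ∧ |q.2| ≤ 1/2 ∧ |c - a * q.1 - q.2| ≤ 1/2}
        = {x | ∃ s t : ℝ, s ∈ Set.Icc (0:ℝ) 1 ∧ t ∈ Set.Icc (0:ℝ) 1 ∧
            x = z + s • v + t • w}) ∧
    volume {q : ℝ × ℝ | |q.1| ≤ 1/2 ∧ |q.2| ≤ 1/2 ∧ |c - a * q.1 - q.2| ≤ 1/2}
      = ENNReal.ofReal (1/a) := by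
  have ha0 : (0:ℝ) < a := by linarith
  have hane : a ≠ 0 := ne_of_gt ha0
  set z : ℝ × ℝ := (c / a, -(1/2)) with hz
  set v : ℝ × ℝ := (1 / a, 0) with hv
  set w : ℝ × ℝ := (-(1 / a), 1) with hw
  have hLvw : ∀ s t : ℝ, z + s • v + t • w = ((c + s - t) / a, t - 1/2) := by
    intro s t
    simp only [hz, hv, hw, Prod.smul_mk, Prod.mk_add_mk, Prod.mk.injEq, smul_eq_mul]
    constructor
    · field_simp; ring
    · ring
  have hset : {q : ℝ × ℝ | |q.1| ≤ 1/2 ∧ |q.2| ≤ 1/2 ∧ |c - a * q.1 - q.2| ≤ 1/2}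
      = {x | ∃ s t : ℝ, s ∈ Set.Icc (0:ℝ) 1 ∧ t ∈ Set.Icc (0:ℝ) 1 ∧
          x = z + s • v + t • w} := by
    ext q
    simp only [Set.mem_setOf_eq, Set.mem_Icc]
    constructor
    · rintro ⟨h1, h2, h3⟩
      rw [abs_le] at h1 h2 h3
      refine ⟨a * q.1 + q.2 - c + 1/2, q.2 + 1/2,
        ⟨by linarith [h3.1, h3.2], by linarith [h3.1, h3.2]⟩,
        ⟨by linarith [h2.1], by linarith [h2.2]⟩, ?_⟩
      rw [hLvw]
      refine Prod.ext ?_ (by simp)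
      show q.1 = (c + (a * q.1 + q.2 - c + 1/2) - (q.2 + 1/2)) / a
      field_simp
      ring
    · rintro ⟨s, t, ⟨hs0, hs1⟩, ⟨ht0, ht1⟩, rfl⟩
      rw [hLvw]
      have key : c - a * ((c + s - t) / a) - (t - 1/2) = 1/2 - s := by
        field_simp; ring
      refine ⟨?_, ?_, ?_⟩
      · rw [abs_le]
        constructor
        · rw [le_div_iff₀ ha0]; nlinarith
        · rw [div_le_iff₀ ha0]; nlinarith
      · rw [abs_le]; constructor <;> simp <;> linarith
      · rw [key, abs_le]; constructor <;> linarith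
  refine ⟨⟨z, v, w, hset⟩, ?_⟩
  have hL2 : ∀ s t : ℝ, z + Lmap a (s, t) = ((c + s - t) / a, t - 1/2) := by
    intro s t
    simp only [hz, Lmap, LinearMap.coe_mk, AddHom.coe_mk, Prod.mk_add_mk, Prod.mk.injEq]
    constructor
    · field_simp; ring
    · ring
  have himg : {x : ℝ × ℝ | ∃ s t : ℝ, s ∈ Set.Icc (0:ℝ) 1 ∧ t ∈ Set.Icc (0:ℝ) 1 ∧
      x = z + s • v + t • w}
      = (fun x => z + x) '' (Lmap a '' (Set.Icc (0:ℝ) 1 ×ˢ Set.Icc (0:ℝ) 1)) := by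
    ext x
    constructor
    · rintro ⟨s, t, hs, ht, rfl⟩
      exact ⟨Lmap a (s, t), ⟨(s, t), ⟨hs, ht⟩, rfl⟩, ((hLvw s t).trans (hL2 s t).symm).symm⟩
    · rintro ⟨y, ⟨⟨s, t⟩, ⟨hs, ht⟩, rfl⟩, rfl⟩
      exact ⟨s, t, hs, ht, ((hL2 s t).trans (hLvw s t).symm)⟩
  rw [hset, himg, Set.image_add_left, measure_preimage_add,
    Measure.addHaar_image_linearMap, det_Lmap,
    MeasureTheory.Measure.volume_eq_prod, Measure.prod_prod]
  rw [abs_of_pos (by positivity : (0:ℝ) < 1 / a)]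
  simp
end

section
/- For 1 < a < 3, the planar region {(x,y) : |x| ≤ 1/2, |y| ≤ 1/2, 0 ≤ ax + y ≤ 1} (the projection of the t = -1/2 face of the slice of [-1/2,1/2]^4 by H : ax + y + z + t = 0) is a convex polygon with exactly 5 vertices (a pentagon). -/
/-!
The region is the pentagon with vertices P₁ = (-1/(2a), 1/2), P₂ = (1/(2a), 1/2),
P₃ = (1/2, 1 - a/2), P₄ = (1/2, -1/2), P₅ = (1/(2a), -1/2). Each Pᵢ is the unique point at which
two of the defining inequalities are tight, hence an extreme point. Conversely, every vertical
fibre of the region joins a point of the lower boundary P₁P₅P₄ to a point of the upper boundary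
P₁P₂P₃, so the region is the convex hull of the Pᵢ, whose extreme points are among the Pᵢ.
-/

open Set

section Extreme

variable {E : Type*} [AddCommGroup E] [Module ℝ E]

theorem LinearMap.eq_of_mem_openSegment_of_le (f : E →ₗ[ℝ] ℝ) {c : ℝ} {x₁ x₂ p : E}
    (h₁ : f x₁ ≤ c) (h₂ : f x₂ ≤ c) (hp : p ∈ openSegment ℝ x₁ x₂) (hfp : f p = c) :
    f x₁ = c := by
  obtain ⟨u, v, hu, hv, huv, rfl⟩ := hp
  simp only [map_add, map_smul, smul_eq_mul] at hfp
  have hsum : u * (c - f x₁) + v * (c - f x₂) = 0 := by linear_combination c * huv - hfp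
  by_contra hne
  linarith [mul_pos hu (sub_pos.2 (lt_of_le_of_ne h₁ hne)), mul_nonneg hv.le (sub_nonneg.2 h₂)]

theorem mem_extremePoints_of_tight_pair {S : Set E} {p : E} (f g : E →ₗ[ℝ] ℝ) (c d : ℝ)
    (hf : ∀ x ∈ S, f x ≤ c) (hg : ∀ x ∈ S, g x ≤ d) (hp : p ∈ S) (hfp : f p = c)
    (hgp : g p = d) (huniq : ∀ x, f x = c → g x = d → x = p) : p ∈ S.extremePoints ℝ :=
  ⟨hp, fun _ h₁ _ h₂ hseg ↦ huniq _ (f.eq_of_mem_openSegment_of_le (hf _ h₁) (hf _ h₂) hseg hfp)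
    (g.eq_of_mem_openSegment_of_le (hg _ h₁) (hg _ h₂) hseg hgp)⟩

theorem Convex.mk_mem_of_snd_mem_Icc {C : Set (E × ℝ)} (hC : Convex ℝ C) {x : E}
    {y₀ y₁ y : ℝ} (h₀ : (x, y₀) ∈ C) (h₁ : (x, y₁) ∈ C) (hy : y ∈ Icc y₀ y₁) : (x, y) ∈ C := by
  refine hC.segment_subset h₀ h₁ ?_
  rw [← Prod.image_mk_segment_right, segment_eq_Icc (hy.1.trans hy.2)]
  exact mem_image_of_mem _ hy

end Extreme

theorem Convex.mk_mem_line_of_mem_Icc {C : Set (ℝ × ℝ)} (hC : Convex ℝ C)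
    {m b x₀ y₀ x₁ y₁ x : ℝ} (h₀ : (x₀, y₀) ∈ C) (h₁ : (x₁, y₁) ∈ C) (hy₀ : y₀ = m * x₀ + b)
    (hy₁ : y₁ = m * x₁ + b) (hx : x ∈ Icc x₀ x₁) : (x, m * x + b) ∈ C := by
  let line : ℝ →ᵃ[ℝ] ℝ × ℝ :=
    ⟨fun t ↦ (t, m * t + b), LinearMap.id.prod (m • LinearMap.id), fun t v ↦ by
      simp only [vadd_eq_add]; ext <;> simp; ring⟩
  subst hy₀ hy₁
  exact (hC.affine_preimage line).ordConnected.out h₀ h₁ hx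

def linearForm (α β : ℝ) : ℝ × ℝ →ₗ[ℝ] ℝ := α • LinearMap.fst ℝ ℝ ℝ + β • LinearMap.snd ℝ ℝ ℝ

@[simp]
theorem linearForm_apply (α β : ℝ) (q : ℝ × ℝ) : linearForm α β q = α * q.1 + β * q.2 := rfl

def facePolygon (a : ℝ) : Set (ℝ × ℝ) :=
  {q | |q.1| ≤ 1/2 ∧ |q.2| ≤ 1/2 ∧ 0 ≤ a * q.1 + q.2 ∧ a * q.1 + q.2 ≤ 1}

noncomputable def pentagonVertices (a : ℝ) : Finset (ℝ × ℝ) :=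
  {(-(1/(2*a)), 1/2), (1/(2*a), 1/2), (1/2, 1 - a/2), (1/2, -(1/2)), (1/(2*a), -(1/2))}

theorem convex_facePolygon (a : ℝ) : Convex ℝ (facePolygon a) := by
  have h : facePolygon a = LinearMap.fst ℝ ℝ ℝ ⁻¹' Icc (-(1/2)) (1/2) ∩
      LinearMap.snd ℝ ℝ ℝ ⁻¹' Icc (-(1/2)) (1/2) ∩ linearForm a 1 ⁻¹' Icc 0 1 := by
    ext q; simp [facePolygon, abs_le, and_assoc]
  rw [h]
  exact (((convex_Icc _ _).linear_preimage _).inter ((convex_Icc _ _).linear_preimage _)).inter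
    ((convex_Icc _ _).linear_preimage _)

section Pentagon

variable {a : ℝ}

theorem card_pentagonVertices (ha1 : 1 < a) (ha3 : a < 3) : (pentagonVertices a).card = 5 := by
  have ha : 0 < a := by linarith
  have hr : 1 / (2 * a) < 1 / 2 := by gcongr; linarith
  have hr0 : 0 < 1 / (2 * a) := by positivity
  simp only [pentagonVertices]
  repeat rw [Finset.card_insert_of_notMem (by
    simp only [Finset.mem_insert, Finset.mem_singleton, Prod.ext_iff, not_or]
    and_intros <;> intro h <;> linarith [h.1, h.2])]
  rfl

theorem pentagonVertices_subset_facePolygon (ha1 : 1 < a) (ha3 : a < 3) :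
    ↑(pentagonVertices a) ⊆ facePolygon a := by
  have ha : 0 < a := by linarith
  simp only [pentagonVertices, Finset.coe_insert, Finset.coe_singleton, insert_subset_iff,
    singleton_subset_iff, facePolygon, mem_ofPred_eq, abs_le]
  field_simp
  norm_num
  and_intros <;> linarith

theorem pentagonVertices_subset_extremePoints (ha1 : 1 < a) (ha3 : a < 3) :
    ↑(pentagonVertices a) ⊆ (facePolygon a).extremePoints ℝ := by
  have ha : a ≠ 0 := by positivity
  have hV := pentagonVertices_subset_facePolygon ha1 ha3
  simp only [pentagonVertices, Finset.coe_insert, Finset.coe_singleton, insert_subset_iff,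
    singleton_subset_iff] at hV ⊢
  obtain ⟨hP1, hP2, hP3, hP4, hP5⟩ := hV
  refine ⟨
    mem_extremePoints_of_tight_pair (linearForm 0 1) (linearForm (-a) (-1)) (1/2) 0 ?_ ?_ hP1
      ?_ ?_ ?_,
    mem_extremePoints_of_tight_pair (linearForm 0 1) (linearForm a 1) (1/2) 1 ?_ ?_ hP2 ?_ ?_ ?_,
    mem_extremePoints_of_tight_pair (linearForm 1 0) (linearForm a 1) (1/2) 1 ?_ ?_ hP3 ?_ ?_ ?_,
    mem_extremePoints_of_tight_pair (linearForm 1 0) (linearForm 0 (-1)) (1/2) (1/2) ?_ ?_ hP4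
      ?_ ?_ ?_,
    mem_extremePoints_of_tight_pair (linearForm 0 (-1)) (linearForm (-a) (-1)) (1/2) 0 ?_ ?_ hP5
      ?_ ?_ ?_⟩
  all_goals first
    | rintro q ⟨hx, hy, hlo, hhi⟩
      rw [abs_le] at hx hy
      simp only [linearForm_apply]
      linarith
    | intro q hf hg
      simp only [linearForm_apply] at hf hg
      ext <;> field_simp <;> nlinarith
    | simp only [linearForm_apply]
      field_simp
      ring

theorem facePolygon_subset_convexHull (ha1 : 1 < a) :
    facePolygon a ⊆ convexHull ℝ ↑(pentagonVertices a) := by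
  have ha : 0 < a := by linarith
  have hr : a * (1 / (2 * a)) = 1 / 2 := by field_simp
  have hC := convex_convexHull ℝ (↑(pentagonVertices a) : Set (ℝ × ℝ))
  have hV : ∀ p ∈ pentagonVertices a, p ∈ convexHull ℝ ↑(pentagonVertices a) :=
    fun p hp ↦ subset_convexHull ℝ _ (Finset.mem_coe.2 hp)
  simp only [pentagonVertices, Finset.mem_insert, Finset.mem_singleton, forall_eq_or_imp,
    forall_eq] at hV
  obtain ⟨hP1, hP2, hP3, hP4, hP5⟩ := hV
  rintro ⟨x, y⟩ ⟨hx, hy, hlo, hhi⟩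
  dsimp only at hx hy hlo hhi
  rw [abs_le] at hx hy
  -- The lower end of the fibre over `x` lies on the edge `P₁P₅` or `P₅P₄`, the upper end on
  -- `P₁P₂` or `P₂P₃`, according as `x` is left or right of `1/(2a)`.
  rcases le_total x (1 / (2 * a)) with hxr | hxr
  · have hlow := hC.mk_mem_line_of_mem_Icc (m := -a) (b := 0) hP1 hP5 (by linarith)
      (by linarith) ⟨by nlinarith, hxr⟩
    have hup := hC.mk_mem_line_of_mem_Icc (m := 0) (b := 1/2) hP1 hP2 (by ring) (by ring)
      ⟨by nlinarith, hxr⟩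
    exact hC.mk_mem_of_snd_mem_Icc hlow hup ⟨by linarith, by linarith⟩
  · have hlow := hC.mk_mem_line_of_mem_Icc (m := 0) (b := -(1/2)) hP5 hP4 (by ring) (by ring)
      ⟨hxr, hx.2⟩
    have hup := hC.mk_mem_line_of_mem_Icc (m := -a) (b := 1) hP2 hP3 (by linarith) (by ring)
      ⟨hxr, hx.2⟩
    exact hC.mk_mem_of_snd_mem_Icc hlow hup ⟨by linarith, by linarith⟩

end Pentagon

theorem face_pentagon (a : ℝ) (ha1 : 1 < a) (ha3 : a < 3) :
    ∃ V : Finset (ℝ × ℝ), V.card = 5 ∧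
      Set.extremePoints ℝ {q : ℝ × ℝ | |q.1| ≤ 1/2 ∧ |q.2| ≤ 1/2 ∧
          0 ≤ a * q.1 + q.2 ∧ a * q.1 + q.2 ≤ 1} = ↑V ∧
      {q : ℝ × ℝ | |q.1| ≤ 1/2 ∧ |q.2| ≤ 1/2 ∧
          0 ≤ a * q.1 + q.2 ∧ a * q.1 + q.2 ≤ 1} = convexHull ℝ ↑V := by
  have hull : facePolygon a = convexHull ℝ ↑(pentagonVertices a) :=
    (facePolygon_subset_convexHull ha1).antisymm
      (convexHull_min (pentagonVertices_subset_facePolygon ha1 ha3) (convex_facePolygon a))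
  refine ⟨pentagonVertices a, card_pentagonVertices ha1 ha3, ?_, hull⟩
  apply (pentagonVertices_subset_extremePoints ha1 ha3).antisymm'
  change (facePolygon a).extremePoints ℝ ⊆ _
  exact hull ▸ extremePoints_convexHull_subset
end

section
/- Let a ≥ b ≥ c ≥ 1 with a ≥ b + c + 1. Then the region {(x,y) : |x| ≤ 1/2, |y| ≤ 1/2, (1-c)/2 ≤ ax + by ≤ (1+c)/2}, which is the projection onto the (x,y)-plane of the face at t = -1/2 of the slice of Q = [-1/2,1/2]^4 by H : ax + by + cz + t = 0, is the parallelogram with vertices ((b-c+1)/(2a), -1/2), ((c+1+b)/(2a), -1/2), ((c+1-b)/(2a), 1/2), ((1-b-c)/(2a), 1/2). -/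
/-! The shear `(x, y) ↦ (a x + b y, y)` maps the region cut out by `|y| ≤ 1/2` and
`(1 - c)/2 ≤ a x + b y ≤ (1 + c)/2` onto a rectangle, so that region is the convex hull of the
preimages of the rectangle's four corners. When `b ≥ 0` and `a ≥ b + c + 1`, the remaining
constraint `|x| ≤ 1/2` follows from the other two, since `a |x| ≤ (1 + c)/2 + b/2 ≤ a/2`. -/

open Set

section

variable {𝕜 : Type*} [Field 𝕜] [LinearOrder 𝕜] [IsStrictOrderedRing 𝕜]

theorem convexHull_rectangle {s₀ s₁ y₀ y₁ : 𝕜} (hs : s₀ ≤ s₁) (hy : y₀ ≤ y₁) :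
    convexHull 𝕜 ({s₀, s₁} ×ˢ {y₀, y₁}) = Icc s₀ s₁ ×ˢ Icc y₀ y₁ := by
  rw [convexHull_prod, convexHull_pair, convexHull_pair, segment_eq_Icc hs, segment_eq_Icc hy]

theorem strip_inter_slab_eq_convexHull {a : 𝕜} (ha : a ≠ 0) (b : 𝕜) {s₀ s₁ y₀ y₁ : 𝕜}
    (hs : s₀ ≤ s₁) (hy : y₀ ≤ y₁) :
    {q : 𝕜 × 𝕜 | q.2 ∈ Icc y₀ y₁ ∧ a * q.1 + b * q.2 ∈ Icc s₀ s₁}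
      = convexHull 𝕜 {((s₀ - b * y₀) / a, y₀), ((s₁ - b * y₀) / a, y₀),
          ((s₁ - b * y₁) / a, y₁), ((s₀ - b * y₁) / a, y₁)} := by
  set unshear : 𝕜 × 𝕜 → 𝕜 × 𝕜 := fun p => ((p.1 - b * p.2) / a, p.2)
  have hlin : IsLinearMap 𝕜 unshear :=
    ⟨fun p q => Prod.ext (by simp only [unshear, Prod.fst_add, Prod.snd_add]; ring) rfl,
      fun r p => Prod.ext (by simp only [unshear, Prod.smul_fst, Prod.smul_snd, smul_eq_mul]; ring)
        rfl⟩
  have hset : {q : 𝕜 × 𝕜 | q.2 ∈ Icc y₀ y₁ ∧ a * q.1 + b * q.2 ∈ Icc s₀ s₁}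
      = unshear '' (Icc s₀ s₁ ×ˢ Icc y₀ y₁) := by
    ext q
    constructor
    · rintro ⟨hq₂, hq₁⟩
      exact ⟨(a * q.1 + b * q.2, q.2), ⟨hq₁, hq₂⟩, by ext <;> simp [unshear, ha]⟩
    · rintro ⟨p, ⟨hp₁, hp₂⟩, rfl⟩
      exact ⟨hp₂, by simpa [unshear, mul_div_cancel₀ _ ha] using hp₁⟩
  have hcorners : unshear '' ({s₀, s₁} ×ˢ {y₀, y₁}) = {((s₀ - b * y₀) / a, y₀),
      ((s₁ - b * y₀) / a, y₀), ((s₁ - b * y₁) / a, y₁), ((s₀ - b * y₁) / a, y₁)} := by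
    ext
    simp only [insert_prod, singleton_prod, image_insert_eq, image_singleton, image_union,
      mem_union, mem_insert_iff, mem_singleton_iff, unshear]
    tauto
  rw [hset, ← convexHull_rectangle hs hy, hlin.image_convexHull, hcorners]

theorem abs_le_half_of_mem_slab {a b c x y : 𝕜} (hb : 0 ≤ b) (habc : b + c + 1 ≤ a)
    (hy : |y| ≤ 1 / 2) (hl : (1 - c) / 2 ≤ a * x + b * y) (hu : a * x + b * y ≤ (1 + c) / 2) :
    |x| ≤ 1 / 2 := by
  rw [abs_le] at hy ⊢
  constructor <;> nlinarith

end

theorem face_parallelogram_general_general (a b c : ℝ)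
    (hbc : b ≥ c) (hc1 : c ≥ 1) (h : a ≥ b + c + 1) :
    {q : ℝ × ℝ | |q.1| ≤ 1/2 ∧ |q.2| ≤ 1/2 ∧
        (1 - c)/2 ≤ a * q.1 + b * q.2 ∧ a * q.1 + b * q.2 ≤ (1 + c)/2}
      = convexHull ℝ {((b - c + 1)/(2*a), -(1/2)), ((c + 1 + b)/(2*a), -(1/2)),
          ((c + 1 - b)/(2*a), 1/2), ((1 - b - c)/(2*a), 1/2)} := by
  have hb : 0 ≤ b := by linarith
  have ha : a ≠ 0 := by linarith
  have hface : {q : ℝ × ℝ | |q.1| ≤ 1/2 ∧ |q.2| ≤ 1/2 ∧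
        (1 - c)/2 ≤ a * q.1 + b * q.2 ∧ a * q.1 + b * q.2 ≤ (1 + c)/2}
      = {q : ℝ × ℝ | q.2 ∈ Icc (-(1/2)) (1/2) ∧
          a * q.1 + b * q.2 ∈ Icc ((1 - c)/2) ((1 + c)/2)} := by
    ext q
    simp only [mem_ofPred_eq, mem_Icc, ← abs_le]
    exact ⟨fun ⟨_, hy, hs⟩ => ⟨hy, hs⟩,
      fun ⟨hy, hs⟩ => ⟨abs_le_half_of_mem_slab hb h hy hs.1 hs.2, hy, hs⟩⟩
  rw [hface, strip_inter_slab_eq_convexHull ha b (by linarith) (by norm_num)]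
  congr 1
  ext q
  simp only [mem_insert_iff, mem_singleton_iff]
  ring_nf

theorem face_parallelogram_general (a b c : ℝ)
    (hab : a ≥ b) (hbc : b ≥ c) (hc1 : c ≥ 1) (h : a ≥ b + c + 1) :
    {q : ℝ × ℝ | |q.1| ≤ 1/2 ∧ |q.2| ≤ 1/2 ∧
        (1 - c)/2 ≤ a * q.1 + b * q.2 ∧ a * q.1 + b * q.2 ≤ (1 + c)/2}
      = convexHull ℝ {((b - c + 1)/(2*a), -(1/2)), ((c + 1 + b)/(2*a), -(1/2)),
          ((c + 1 - b)/(2*a), 1/2), ((1 - b - c)/(2*a), 1/2)} :=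
  face_parallelogram_general_general a b c hbc hc1 h
end

section
/- The area of the hexagon {(x,y) : |x| ≤ 1/2, |y| ≤ 1/2, -1/2 + c ≤ x + y ≤ 1/2 + c} for 0 ≤ c < 1/2 equals 3/4 - c^2, and integrating 2·(3/4 - c²) over c ∈ [0, 1/2] and doubling gives 4/3 (the volume of the slice of [-1/2,1/2]^4 by x+y+z+t=0). -/
/-!
Each vertical slice of the hexagon at abscissa `x` is an interval of length `1 - |x - c|`, so by
Fubini its area is `1 - ∫_{-1/2}^{1/2} |x - c| dx = 1 - (c² + 1/4)`.
-/

open MeasureTheory Set intervalIntegral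

theorem volume_region_between_cc_eq_lintegral {α : Type*} [MeasurableSpace α] {μ : Measure α}
    {f g : α → ℝ} {s : Set α} (hf : Measurable f) (hg : Measurable g) (hs : MeasurableSet s) :
    μ.prod volume {p : α × ℝ | p.1 ∈ s ∧ p.2 ∈ Icc (f p.1) (g p.1)}
      = ∫⁻ x in s, ENNReal.ofReal (g x - f x) ∂μ := by
  rw [Measure.prod_apply (measurableSet_region_between_cc hf hg hs),
    ← lintegral_indicator hs]
  refine lintegral_congr fun x => ?_
  by_cases hx : x ∈ s
  · rw [indicator_of_mem hx, ← Real.volume_Icc]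
    congr 1
    ext y
    simp [hx]
  · simp [hx]

theorem integral_zero_abs (b : ℝ) : ∫ x in (0 : ℝ)..b, |x| = b * |b| / 2 := by
  rcases le_total 0 b with hb | hb
  · rw [integral_congr (g := fun x => x) fun x hx => abs_of_nonneg (uIcc_of_le hb ▸ hx).1,
      integral_id, abs_of_nonneg hb]
    ring
  · rw [integral_congr (g := fun x => -x) fun x hx => abs_of_nonpos (uIcc_of_ge hb ▸ hx).2,
      intervalIntegral.integral_neg, integral_id, abs_of_nonpos hb]
    ring

theorem integral_abs (a b : ℝ) : ∫ x in a..b, |x| = (b * |b| - a * |a|) / 2 := by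
  rw [← integral_add_adjacent_intervals (b := 0) (continuous_abs.intervalIntegrable _ _)
    (continuous_abs.intervalIntegrable _ _), integral_symm, integral_zero_abs, integral_zero_abs]
  ring

theorem integral_abs_sub (a b c : ℝ) :
    ∫ x in a..b, |x - c| = ((b - c) * |b - c| - (a - c) * |a - c|) / 2 := by
  rw [integral_comp_sub_right (fun x => |x|), integral_abs]

def hexagon (c : ℝ) : Set (ℝ × ℝ) :=
  {q | |q.1| ≤ 1/2 ∧ |q.2| ≤ 1/2 ∧ -1/2 + c ≤ q.1 + q.2 ∧ q.1 + q.2 ≤ 1/2 + c}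

theorem hexagon_eq_setOf_mem_Icc (c : ℝ) :
    hexagon c = {p : ℝ × ℝ | p.1 ∈ Icc (-1/2) (1/2) ∧
      p.2 ∈ Icc (max (-1/2) (-1/2 + c - p.1)) (min (1/2) (1/2 + c - p.1))} := by
  ext ⟨x, y⟩
  simp only [hexagon, mem_ofPred_eq, mem_Icc, abs_le, max_le_iff, le_min_iff]
  constructor
  · rintro ⟨hx, hy, hlo, hhi⟩
    exact ⟨⟨by linarith, by linarith⟩, ⟨by linarith, by linarith⟩, hy.2, by linarith⟩
  · rintro ⟨hx, ⟨hy₁, hlo⟩, hy₂, hhi⟩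
    exact ⟨⟨by linarith, by linarith⟩, ⟨by linarith, by linarith⟩,
      by linarith, by linarith⟩

theorem min_add_sub_max_add (a b t : ℝ) : min a (a + t) - max b (b + t) = a - b - |t| := by
  rcases le_total 0 t with ht | ht
  · rw [min_eq_left (by linarith), max_eq_right (by linarith), abs_of_nonneg ht]
    ring
  · rw [min_eq_right (by linarith), max_eq_left (by linarith), abs_of_nonpos ht]
    ring

theorem integral_one_sub_abs_sub {c : ℝ} (hc : |c| ≤ 1/2) :
    ∫ x in (-1/2 : ℝ)..(1/2), (1 - |x - c|) = 3/4 - c^2 := by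
  obtain ⟨hc₁, hc₂⟩ := abs_le.1 hc
  rw [intervalIntegral.integral_sub intervalIntegrable_const
      (Continuous.intervalIntegrable (by fun_prop : Continuous fun x : ℝ => |x - c|) _ _),
    intervalIntegral.integral_const, integral_abs_sub, abs_of_nonneg (by linarith : 0 ≤ 1/2 - c),
    abs_of_nonpos (by linarith : -1/2 - c ≤ 0), smul_eq_mul]
  ring

theorem volume_hexagon {c : ℝ} (hc : |c| ≤ 1/2) :
    volume (hexagon c) = ENNReal.ofReal (3/4 - c^2) := by
  have hwidth : ∀ x : ℝ, min (1/2) (1/2 + c - x) - max (-1/2) (-1/2 + c - x) = 1 - |x - c| := by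
    intro x
    rw [add_sub_assoc, add_sub_assoc, min_add_sub_max_add, abs_sub_comm]
    ring
  have hint : IntegrableOn (fun x : ℝ => 1 - |x - c|) (Icc (-1/2) (1/2)) :=
    Continuous.integrableOn_Icc (by fun_prop)
  have hnonneg : 0 ≤ᵐ[volume.restrict (Icc (-1/2 : ℝ) (1/2))] fun x => 1 - |x - c| := by
    filter_upwards [ae_restrict_mem measurableSet_Icc] with x hx
    rw [Pi.zero_apply, sub_nonneg, abs_le]
    constructor <;> linarith [hx.1, hx.2, abs_le.1 hc]
  rw [hexagon_eq_setOf_mem_Icc, Measure.volume_eq_prod,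
    volume_region_between_cc_eq_lintegral (f := fun x => max (-1/2) (-1/2 + c - x))
      (g := fun x => min (1/2) (1/2 + c - x)) (by fun_prop) (by fun_prop) measurableSet_Icc]
  simp only [hwidth]
  rw [← ofReal_integral_eq_lintegral_ofReal hint hnonneg, integral_Icc_eq_integral_Ioc,
    ← integral_of_le (by norm_num), integral_one_sub_abs_sub hc]

theorem hexagon_area_and_volume :
    (∀ c : ℝ, 0 ≤ c → c < 1/2 →
      volume {q : ℝ × ℝ | |q.1| ≤ 1/2 ∧ |q.2| ≤ 1/2 ∧
          -1/2 + c ≤ q.1 + q.2 ∧ q.1 + q.2 ≤ 1/2 + c}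
        = ENNReal.ofReal (3/4 - c^2)) ∧
    2 * ∫ c in (0:ℝ)..(1/2), 2 * (3/4 - c^2) = 4/3 := by
  refine ⟨fun c hc₀ hc₁ => volume_hexagon (abs_le.2 ⟨by linarith, hc₁.le⟩), ?_⟩
  rw [intervalIntegral.integral_const_mul,
    intervalIntegral.integral_sub intervalIntegrable_const (intervalIntegrable_pow 2),
    intervalIntegral.integral_const, integral_pow]
  norm_num
end
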